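/- arXiv:2401.12753 — 5 statements merged into one kernel-verified Lean document; each statement's English description precedes it below -/
import Mathlib

section
/- Let ψℓ(x) := (1 − ((2d+4)/(d+1))‖x‖ + ((d+3)/(d+1))‖x‖²)·1{‖x‖≤1} on ℝ^d. Then for every convex function g: ℝ^d → ℝ with g(0) = 0, ∫_{‖x‖≤1} g(x)ψℓ(x) dx ≤ 0. -/
/-!
Write `ψℓ(x) = c (ρ - ‖x‖)(1 - ‖x‖)` with `ρ = (d+1)/(d+3)` and `c = 1/ρ`, so `ψℓ` changes sign
exactly on the sphere of radius `ρ`. Let `h(r u) = r g(ρ u)/ρ` be the positively homogeneous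
function agreeing with `g` on that sphere. Convexity and `g 0 = 0` make `t ↦ g(t u)/t`
nondecreasing, so `g ≤ h` inside the sphere and `g ≥ h` outside it; hence `g ψℓ ≤ h ψℓ`.
In polar coordinates `∫ h ψℓ` factors as `(∫_S g(ρ u)/ρ dσ(u)) · ∫₀¹ rᵈ ψℓ(r) dr`, and the
radial integral is `1/(d+1) - (2d+4)/((d+1)(d+2)) + 1/(d+1) = 0`.
-/

open MeasureTheory Measure Metric Set

local notation "dim" => Module.finrank ℝ

namespace MeasureTheory

section Polar

variable {E F : Type*} [NormedAddCommGroup E] [NormedSpace ℝ E] [FiniteDimensional ℝ E]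
  [MeasurableSpace E] [BorelSpace E] (μ : Measure E) [μ.IsAddHaarMeasure] [NormedAddCommGroup F]

theorem measurePreserving_homeomorphUnitSphereProd_symm :
    MeasurePreserving (homeomorphUnitSphereProd E).symm
      (μ.toSphere.prod (volumeIoiPow (dim E - 1))) (μ.comap (↑)) :=
  (μ.measurePreserving_homeomorphUnitSphereProd.symm
    (homeomorphUnitSphereProd E).toMeasurableEquiv :)

theorem Integrable.comp_smul_toSphere_prod {f : E → F} (hf : Integrable f μ) :
    Integrable (fun p : sphere (0 : E) 1 × Ioi (0 : ℝ) ↦ f ((p.2 : ℝ) • (p.1 : E)))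
      (μ.toSphere.prod (volumeIoiPow (dim E - 1))) := by
  have := hf.integrableOn (s := {0}ᶜ)
  rwa [integrableOn_iff_comap_subtypeVal (measurableSet_singleton _).compl,
    ← (measurePreserving_homeomorphUnitSphereProd_symm μ).integrable_comp_emb
      (Homeomorph.measurableEmbedding _)] at this

variable [Nontrivial E]

theorem integral_eq_integral_toSphere_prod [NormedSpace ℝ F] (f : E → F) :
    ∫ x, f x ∂μ = ∫ p : sphere (0 : E) 1 × Ioi (0 : ℝ), f ((p.2 : ℝ) • (p.1 : E))
      ∂μ.toSphere.prod (volumeIoiPow (dim E - 1)) := by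
  conv_lhs => rw [← restrict_compl_singleton (μ := μ) 0,
    ← integral_subtype_comap (measurableSet_singleton _).compl,
    ← (measurePreserving_homeomorphUnitSphereProd_symm μ).integral_comp
      (Homeomorph.measurableEmbedding _)]
  rfl

theorem integral_le_integral_toSphere_mul_integral_volumeIoiPow {f : E → ℝ}
    {φ : sphere (0 : E) 1 → ℝ} {χ : ℝ → ℝ} (hf : Integrable f μ) (hφ : Integrable φ μ.toSphere)
    (hχ : Integrable (fun r : Ioi (0 : ℝ) ↦ χ r) (volumeIoiPow (dim E - 1)))
    (hle : ∀ (u : sphere (0 : E) 1) (r : Ioi (0 : ℝ)), f ((r : ℝ) • (u : E)) ≤ φ u * χ r) :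
    ∫ x, f x ∂μ ≤ (∫ u, φ u ∂μ.toSphere) * ∫ r : Ioi (0 : ℝ), χ r ∂volumeIoiPow (dim E - 1) := by
  rw [integral_eq_integral_toSphere_prod, ← integral_prod_mul]
  exact integral_mono (hf.comp_smul_toSphere_prod μ) (hφ.mul_prod hχ) fun p ↦ hle p.1 p.2

end Polar

section VolumeIoiPow

variable {F : Type*} [NormedAddCommGroup F] [NormedSpace ℝ F]

theorem integrable_volumeIoiPow_iff {n : ℕ} {f : ℝ → F} :
    Integrable (fun r : Ioi (0 : ℝ) ↦ f r) (volumeIoiPow n) ↔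
      IntegrableOn (fun r ↦ r ^ n • f r) (Ioi 0) := by
  rw [volumeIoiPow, integrable_withDensity_iff_integrable_smul' (by fun_prop)
    (.of_forall fun _ ↦ ENNReal.ofReal_lt_top), integrableOn_iff_comap_subtypeVal measurableSet_Ioi]
  refine integrable_congr (.of_forall fun r ↦ ?_)
  simp [ENNReal.toReal_ofReal (pow_nonneg r.2.out.le n)]

theorem integral_volumeIoiPow (n : ℕ) (f : ℝ → F) :
    ∫ r : Ioi (0 : ℝ), f r ∂volumeIoiPow n = ∫ r in Ioi 0, r ^ n • f r := by
  simp only [volumeIoiPow, ENNReal.ofReal]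
  rw [integral_withDensity_eq_integral_smul (by fun_prop),
    integral_subtype_comap measurableSet_Ioi fun r ↦ Real.toNNReal (r ^ n) • f r]
  refine setIntegral_congr_fun measurableSet_Ioi fun r hr ↦ ?_
  rw [NNReal.smul_def, Real.coe_toNNReal _ (pow_nonneg hr.out.le _)]

end VolumeIoiPow

end MeasureTheory

theorem ConvexOn.monotoneOn_apply_smul_div {E : Type*} [AddCommGroup E] [Module ℝ E] {g : E → ℝ}
    (hg : ConvexOn ℝ univ g) (h0 : g 0 = 0) (u : E) :
    MonotoneOn (fun t : ℝ ↦ g (t • u) / t) (Ioi 0) := by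
  intro s hs t ht hst
  have := (hg.comp_linearMap (LinearMap.toSpanSingleton ℝ E u)).secant_mono (a := 0)
    (mem_univ _) (mem_univ s) (mem_univ t) hs.out.ne' ht.out.ne' hst
  simpa [h0] using this

/-- The radial profile of `ψℓ`: `ψℓ x = lowerKernel d ‖x‖` on the closed unit ball. -/
noncomputable def lowerKernel (d : ℕ) (s : ℝ) : ℝ :=
  1 - ((2 * (d : ℝ) + 4) / ((d : ℝ) + 1)) * s + (((d : ℝ) + 3) / ((d : ℝ) + 1)) * s ^ 2

namespace lowerKernel

noncomputable def root (d : ℕ) : ℝ := (d + 1) / (d + 3)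

theorem root_pos (d : ℕ) : 0 < root d := by
  unfold root
  positivity

theorem eq_mul (d : ℕ) (s : ℝ) : lowerKernel d s = (root d)⁻¹ * (root d - s) * (1 - s) := by
  unfold lowerKernel root
  field_simp
  ring

theorem integral_pow_mul (d : ℕ) : ∫ s in (0 : ℝ)..1, s ^ d * lowerKernel d s = 0 := by
  have hexpand : (fun s : ℝ ↦ s ^ d * lowerKernel d s) = fun s ↦
      s ^ d - (2 * (d : ℝ) + 4) / (d + 1) * s ^ (d + 1) + (d + 3) / (d + 1) * s ^ (d + 2) := by
    ext s; unfold lowerKernel; ring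
  have hint {f : ℝ → ℝ} (hf : Continuous f) : IntervalIntegrable f volume 0 1 :=
    hf.intervalIntegrable 0 1
  rw [hexpand, intervalIntegral.integral_add (hint (by fun_prop)) (hint (by fun_prop)),
    intervalIntegral.integral_sub (hint (by fun_prop)) (hint (by fun_prop)),
    intervalIntegral.integral_const_mul, intervalIntegral.integral_const_mul,
    integral_pow, integral_pow, integral_pow]
  push_cast
  field_simp
  ring

theorem integrable_volumeIoiPow (d : ℕ) :
    Integrable (fun r : Ioi (0 : ℝ) ↦ (Iic 1).indicator (fun s ↦ s * lowerKernel d s) r)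
      (volumeIoiPow (d - 1)) := by
  rw [integrable_volumeIoiPow_iff]
  simp_rw [← indicator_smul_apply (Iic 1) (fun r : ℝ ↦ r ^ (d - 1))]
  rw [integrableOn_indicator_iff measurableSet_Iic, inter_comm, Ioi_inter_Iic]
  unfold lowerKernel
  exact Continuous.integrableOn_Ioc (by fun_prop)

theorem integral_volumeIoiPow {d : ℕ} (hd : 0 < d) :
    ∫ r : Ioi (0 : ℝ), (Iic 1).indicator (fun s ↦ s * lowerKernel d s) r
      ∂volumeIoiPow (d - 1) = 0 := by
  rw [MeasureTheory.integral_volumeIoiPow]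
  simp_rw [← indicator_smul_apply (Iic 1) (fun r : ℝ ↦ r ^ (d - 1))]
  rw [setIntegral_indicator measurableSet_Iic, Ioi_inter_Iic,
    ← intervalIntegral.integral_of_le zero_le_one]
  refine (intervalIntegral.integral_congr fun s _ ↦ ?_).trans (integral_pow_mul d)
  rw [smul_eq_mul, ← mul_assoc, ← pow_succ, Nat.sub_add_cancel hd]

theorem apply_smul_mul_le {E : Type*} [AddCommGroup E] [Module ℝ E] {g : E → ℝ}
    (hg : ConvexOn ℝ univ g) (h0 : g 0 = 0) (d : ℕ) (u : E) {r : ℝ} (hr : r ∈ Ioc 0 1) :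
    g (r • u) * lowerKernel d r ≤ g (root d • u) / root d * (r * lowerKernel d r) := by
  set ρ := root d
  set m : ℝ → ℝ := fun t ↦ g (t • u) / t
  have hmono := hg.monotoneOn_apply_smul_div h0 u
  have hρ : ρ ∈ Ioi 0 := root_pos d
  have hr₀ : r ∈ Ioi 0 := hr.1
  have hsign : (m r - m ρ) * (ρ - r) ≤ 0 := by
    rcases le_total r ρ with h | h
    · exact mul_nonpos_of_nonpos_of_nonneg (sub_nonpos.2 (hmono hr₀ hρ h)) (sub_nonneg.2 h)
    · exact mul_nonpos_of_nonneg_of_nonpos (sub_nonneg.2 (hmono hρ hr₀ h)) (sub_nonpos.2 h)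
  have hfactor : m ρ * (r * lowerKernel d r) - g (r • u) * lowerKernel d r
      = -(r * ρ⁻¹ * (1 - r) * ((m r - m ρ) * (ρ - r))) := by
    rw [show g (r • u) = r * m r from (mul_div_cancel₀ _ hr₀.out.ne').symm, eq_mul]
    ring
  have hcoef : 0 ≤ r * ρ⁻¹ * (1 - r) :=
    mul_nonneg (mul_nonneg hr.1.le (inv_nonneg.2 hρ.out.le)) (sub_nonneg.2 hr.2)
  linarith [mul_nonpos_of_nonneg_of_nonpos hcoef hsign]

theorem indicator_closedBall_apply_smul_le {E : Type*} [NormedAddCommGroup E] [NormedSpace ℝ E]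
    {g : E → ℝ} (hg : ConvexOn ℝ univ g) (h0 : g 0 = 0) (d : ℕ) {u : E} (hu : ‖u‖ = 1)
    {r : ℝ} (hr : 0 < r) :
    (closedBall 0 1).indicator (fun x ↦ g x * lowerKernel d ‖x‖) (r • u)
      ≤ g (root d • u) / root d * (Iic 1).indicator (fun s ↦ s * lowerKernel d s) r := by
  have hnorm : ‖r • u‖ = r := by rw [norm_smul, hu, Real.norm_of_nonneg hr.le, mul_one]
  by_cases hr₁ : r ≤ 1
  · rw [indicator_of_mem (mem_closedBall_zero_iff.2 (hnorm.trans_le hr₁)), hnorm,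
      indicator_of_mem (mem_Iic.2 hr₁)]
    exact apply_smul_mul_le hg h0 d u ⟨hr, hr₁⟩
  · rw [indicator_of_notMem (fun h ↦ hr₁ (hnorm ▸ mem_closedBall_zero_iff.1 h)),
      indicator_of_notMem (by simpa using hr₁), mul_zero]

end lowerKernel

/-- For the kernel `ψℓ(x) = (1 - ((2d+4)/(d+1))‖x‖ + ((d+3)/(d+1))‖x‖²)·1{‖x‖ ≤ 1}` on `ℝ^d`
and every convex function `g : ℝ^d → ℝ` with `g 0 = 0`,
one has `∫_{‖x‖≤1} g(x) ψℓ(x) dx ≤ 0`. -/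
theorem convex_lower_kernel_nonpos {d : ℕ} (g : EuclideanSpace ℝ (Fin d) → ℝ)
    (hg : ConvexOn ℝ Set.univ g) (h0 : g 0 = 0) :
    ∫ x in Metric.closedBall (0 : EuclideanSpace ℝ (Fin d)) 1,
      g x * (1 - ((2 * (d : ℝ) + 4) / ((d : ℝ) + 1)) * ‖x‖
        + (((d : ℝ) + 3) / ((d : ℝ) + 1)) * ‖x‖ ^ 2) ≤ 0 := by
  change ∫ x in closedBall (0 : EuclideanSpace ℝ (Fin d)) 1, g x * lowerKernel d ‖x‖ ≤ 0
  rcases Nat.eq_zero_or_pos d with rfl | hd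
  · simp [Subsingleton.elim _ (0 : EuclideanSpace ℝ (Fin 0)), h0]
  have : Nontrivial (EuclideanSpace ℝ (Fin d)) :=
    Module.finrank_pos_iff.mp (by rwa [finrank_euclideanSpace_fin])
  have hgc : Continuous g := continuousOn_univ.mp (hg.continuousOn isOpen_univ)
  have hint : Integrable ((closedBall (0 : EuclideanSpace ℝ (Fin d)) 1).indicator
      fun x ↦ g x * lowerKernel d ‖x‖) :=
    (ContinuousOn.integrableOn_compact (isCompact_closedBall _ _)
      (by unfold lowerKernel; fun_prop)).integrable_indicator measurableSet_closedBall
  have hφ : Integrable (fun u : sphere (0 : EuclideanSpace ℝ (Fin d)) 1 ↦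
      g (lowerKernel.root d • (u : _)) / lowerKernel.root d) volume.toSphere :=
    Continuous.integrable_of_hasCompactSupport (by fun_prop) (.of_compactSpace _)
  rw [← integral_indicator measurableSet_closedBall]
  refine (integral_le_integral_toSphere_mul_integral_volumeIoiPow volume hint hφ
    (χ := (Iic 1).indicator fun s ↦ s * lowerKernel d s) ?_ fun u r ↦ ?_).trans_eq ?_
  · rw [finrank_euclideanSpace_fin]
    exact lowerKernel.integrable_volumeIoiPow d
  · exact lowerKernel.indicator_closedBall_apply_smul_le hg h0 d (norm_eq_of_mem_sphere u) r.2
  · rw [finrank_euclideanSpace_fin, lowerKernel.integral_volumeIoiPow hd, mul_zero]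
end

section
/- Let f: ℝ^d → ℝ be continuously differentiable on a hyperrectangle B with ∂f/∂xᵢ ≥ Mᵢ > 0 on B for each i. Fix t ∈ B, h = (h₁,…,h_d) with hᵢMᵢ = h₁M₁ for all i, and define f_t(x) := f(x) − h₁M₁·ψ((x₁−t₁)/h₁,…,(x_d−t_d)/h_d), where ψ(u) := (1+Σᵢuᵢ)·1{u ≤ 0, Σᵢuᵢ ≥ −1}. If the set {x: x ≤ t componentwise and Σᵢ(xᵢ−tᵢ)/hᵢ ≥ −1} is contained in B, then f_t is coordinate-wise nondecreasing. -/
/-!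
On the simplex `T = {x ≤ t, Σᵢ (xᵢ - tᵢ)/hᵢ ≥ -1}` the perturbation `c·ψ((x - t)/h)` is the
affine function `c + Σᵢ Mᵢ (xᵢ - tᵢ)` (as `c / hᵢ = Mᵢ`), whose increments along `x ≤ y` are
dominated by those of `f` by the mean value theorem, since `∂ᵢ f ≥ Mᵢ` on `T`. Off `T` the
perturbation vanishes and on `T` it is nonnegative, so for `x ≤ y` the only delicate case is
`x ∉ T ∋ y`: there one passes through a point `z ∈ [x, y]` on the face `Σᵢ (zᵢ - tᵢ)/hᵢ = -1`,
where the perturbation is `0`, and uses the monotonicity of `f` between `x` and `z`.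
-/

/-- The lower isotonic simplex kernel `ψ(u) = (1 + Σᵢ uᵢ)·1{u ≤ 0, Σᵢ uᵢ ≥ -1}`. -/
noncomputable def psiIso {d : ℕ} (u : EuclideanSpace ℝ (Fin d)) : ℝ :=
  Set.indicator {u : EuclideanSpace ℝ (Fin d) | (∀ i, u i ≤ 0) ∧ -1 ≤ ∑ i, u i}
    (fun u => 1 + ∑ i, u i) u

open Set

theorem sub_indicator_le_sub_indicator {α : Type*} {r : α → α → Prop} {g L : α → ℝ}
    {T : Set α} (hg : ∀ x y, r x y → g x ≤ g y) (hL : ∀ x ∈ T, 0 ≤ L x)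
    (hgL : ∀ x ∈ T, ∀ y ∈ T, r x y → L y - L x ≤ g y - g x)
    (hcross : ∀ x ∉ T, ∀ y ∈ T, r x y → ∃ z ∈ T, r x z ∧ r z y ∧ L z = 0)
    {x y : α} (hxy : r x y) :
    g x - T.indicator L x ≤ g y - T.indicator L y := by
  by_cases hy : y ∈ T
  · by_cases hx : x ∈ T
    · rw [indicator_of_mem hx, indicator_of_mem hy]
      linarith [hgL x hx y hy hxy]
    · obtain ⟨z, hz, hxz, hzy, hLz⟩ := hcross x hx y hy hxy
      rw [indicator_of_notMem hx, indicator_of_mem hy]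
      linarith [hg x z hxz, hgL z hz y hy hzy]
  · rw [indicator_of_notMem hy]
    linarith [hg x y hxy, indicator_nonneg hL x]

theorem differentiableAt_of_fderiv_apply_ne_zero {𝕜 E F : Type*} [NontriviallyNormedField 𝕜]
    [NormedAddCommGroup E] [NormedSpace 𝕜 E] [NormedAddCommGroup F] [NormedSpace 𝕜 F]
    {f : E → F} {x v : E} (h : fderiv 𝕜 f x v ≠ 0) : DifferentiableAt 𝕜 f x := by
  contrapose! h
  simp [fderiv_zero_of_not_differentiableAt h]

namespace EuclideanSpace

theorem apply_mem_Icc_of_mem_segment {ι : Type*} {x y z : EuclideanSpace ℝ ι}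
    (hxy : ∀ i, x i ≤ y i) (hz : z ∈ segment ℝ x y) (i : ι) : z i ∈ Icc (x i) (y i) := by
  obtain ⟨a, b, ha, hb, hab, rfl⟩ := hz
  obtain rfl : a = 1 - b := by linarith
  simp only [PiLp.add_apply, PiLp.smul_apply, smul_eq_mul]
  constructor <;>
    nlinarith [mul_le_mul_of_nonneg_left (hxy i) ha, mul_le_mul_of_nonneg_left (hxy i) hb]

variable {ι : Type*} [Fintype ι] [DecidableEq ι]

theorem sum_mul_sub_le_sub_of_le_fderiv {f : EuclideanSpace ℝ ι → ℝ} {M : ι → ℝ}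
    {x y : EuclideanSpace ℝ ι} (hxy : ∀ i, x i ≤ y i)
    (hdiff : ∀ z ∈ segment ℝ x y, DifferentiableAt ℝ f z)
    (hderiv : ∀ z ∈ segment ℝ x y, ∀ i, M i ≤ fderiv ℝ f z (single i 1)) :
    ∑ i, M i * (y i - x i) ≤ f y - f x := by
  obtain ⟨z, hz, hfz⟩ := domain_mvt (fun z hz => (hdiff z hz).hasFDerivAt.hasFDerivWithinAt)
    (convex_segment x y) (left_mem_segment ℝ x y) (right_mem_segment ℝ x y)
  have hsum : fderiv ℝ f z (y - x) = ∑ i, (y i - x i) * fderiv ℝ f z (single i 1) := by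
    conv_lhs => rw [← (basisFun ι ℝ).sum_repr (y - x)]
    simp [basisFun_apply]
  rw [hfz, hsum]
  refine Finset.sum_le_sum fun i _ => ?_
  rw [mul_comm]
  exact mul_le_mul_of_nonneg_left (hderiv z hz i) (sub_nonneg.2 (hxy i))

end EuclideanSpace

def lowerSimplex {ι : Type*} [Fintype ι] (t : EuclideanSpace ℝ ι) (h : ι → ℝ) :
    Set (EuclideanSpace ℝ ι) :=
  {x | (∀ i, x i ≤ t i) ∧ -1 ≤ ∑ i, (x i - t i) / h i}

theorem psiIso_toLp_div_eq_indicator {d : ℕ} {t x : EuclideanSpace ℝ (Fin d)}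
    {h : Fin d → ℝ} (hh : ∀ i, 0 < h i) :
    psiIso (WithLp.toLp 2 fun i => (x i - t i) / h i) =
      (lowerSimplex t h).indicator (fun x => 1 + ∑ i, (x i - t i) / h i) x := by
  simp [psiIso, lowerSimplex, indicator, div_le_iff₀ (hh _)]

section LowerSimplex

variable {ι : Type*} [Fintype ι] {t : EuclideanSpace ℝ ι} {h : ι → ℝ}

theorem mem_lowerSimplex_of_le_of_le (hh : ∀ i, 0 ≤ h i) {x y z : EuclideanSpace ℝ ι}
    (hx : x ∈ lowerSimplex t h) (hy : y ∈ lowerSimplex t h) (hxz : ∀ i, x i ≤ z i)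
    (hzy : ∀ i, z i ≤ y i) : z ∈ lowerSimplex t h :=
  ⟨fun i => (hzy i).trans (hy.1 i), hx.2.trans <| Finset.sum_le_sum fun i _ =>
    div_le_div_of_nonneg_right (sub_le_sub_right (hxz i) _) (hh i)⟩

theorem sum_mul_sub_le_sub_of_mem_lowerSimplex [DecidableEq ι] (hh : ∀ i, 0 ≤ h i)
    {f : EuclideanSpace ℝ ι → ℝ} {M : ι → ℝ}
    (hdiff : ∀ z ∈ lowerSimplex t h, DifferentiableAt ℝ f z)
    (hderiv : ∀ z ∈ lowerSimplex t h, ∀ i, M i ≤ fderiv ℝ f z (EuclideanSpace.single i 1))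
    {x y : EuclideanSpace ℝ ι} (hx : x ∈ lowerSimplex t h) (hy : y ∈ lowerSimplex t h)
    (hxy : ∀ i, x i ≤ y i) :
    ∑ i, M i * (y i - x i) ≤ f y - f x := by
  have hseg : ∀ z ∈ segment ℝ x y, z ∈ lowerSimplex t h := fun z hz =>
    have hz := EuclideanSpace.apply_mem_Icc_of_mem_segment hxy hz
    mem_lowerSimplex_of_le_of_le hh hx hy (fun i => (hz i).1) (fun i => (hz i).2)
  exact EuclideanSpace.sum_mul_sub_le_sub_of_le_fderiv hxy (fun z hz => hdiff z (hseg z hz))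
    (fun z hz => hderiv z (hseg z hz))

theorem exists_mem_lowerSimplex_sum_div_eq {x y : EuclideanSpace ℝ ι}
    (hx : x ∉ lowerSimplex t h) (hy : y ∈ lowerSimplex t h) (hxy : ∀ i, x i ≤ y i) :
    ∃ z ∈ lowerSimplex t h, (∀ i, x i ≤ z i) ∧ (∀ i, z i ≤ y i) ∧
      ∑ i, (z i - t i) / h i = -1 := by
  have hSx : ∑ i, (x i - t i) / h i ≤ -1 := by
    by_contra! hS
    exact hx ⟨fun i => (hxy i).trans (hy.1 i), hS.le⟩
  have hS : Continuous fun z : EuclideanSpace ℝ ι => ∑ i, (z i - t i) / h i := by fun_prop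
  obtain ⟨z, hz, hSz⟩ := (convex_segment x y).isPreconnected.intermediate_value
    (left_mem_segment ℝ x y) (right_mem_segment ℝ x y) hS.continuousOn ⟨hSx, hy.2⟩
  have hzI := EuclideanSpace.apply_mem_Icc_of_mem_segment hxy hz
  exact ⟨z, ⟨fun i => (hzI i).2.trans (hy.1 i), hSz.ge⟩, fun i => (hzI i).1,
    fun i => (hzI i).2, hSz⟩

end LowerSimplex

theorem perturbed_isotonic_general {d : ℕ} (f : EuclideanSpace ℝ (Fin d) → ℝ)
    (t : EuclideanSpace ℝ (Fin d)) (M h : Fin d → ℝ) (c : ℝ)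
    (B : Set (EuclideanSpace ℝ (Fin d)))
    (hmono : ∀ x y : EuclideanSpace ℝ (Fin d), (∀ i, x i ≤ y i) → f x ≤ f y)
    (hM : ∀ i, 0 < M i)
    (hderiv : ∀ x ∈ B, ∀ i, M i ≤ fderiv ℝ f x (EuclideanSpace.single i 1))
    (hh : ∀ i, 0 < h i)
    (hc : ∀ i, h i * M i = c)
    (hT : {x : EuclideanSpace ℝ (Fin d) |
        (∀ i, x i ≤ t i) ∧ -1 ≤ ∑ i, (x i - t i) / h i} ⊆ B) :
    ∀ x y : EuclideanSpace ℝ (Fin d), (∀ i, x i ≤ y i) →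
      f x - c * psiIso (WithLp.toLp 2 (fun i => (x i - t i) / h i)) ≤
        f y - c * psiIso (WithLp.toLp 2 (fun i => (y i - t i) / h i)) := by
  intro x y hxy
  rcases isEmpty_or_nonempty (Fin d) with hd | ⟨⟨i₀⟩⟩
  · rw [Subsingleton.elim (WithLp.toLp 2 fun i => (x i - t i) / h i)
      (WithLp.toLp 2 fun i => (y i - t i) / h i)]
    linarith [hmono x y hxy]
  have hc₀ : 0 < c := hc i₀ ▸ mul_pos (hh i₀) (hM i₀)
  have hsum : ∀ p q : EuclideanSpace ℝ (Fin d), ∑ i, M i * (q i - p i) =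
      c * (1 + ∑ i, (q i - t i) / h i) - c * (1 + ∑ i, (p i - t i) / h i) := by
    intro p q
    rw [mul_add, mul_add, add_sub_add_left_eq_sub, ← mul_sub, ← Finset.sum_sub_distrib,
      Finset.mul_sum]
    refine Finset.sum_congr rfl fun i _ => ?_
    rw [← hc i]
    field_simp [(hh i).ne']
    ring
  -- `fderiv` is `0` where `f` is not differentiable, so the bound `0 < M i₀ ≤ ∂ᵢ₀ f` forces it.
  have hdiff : ∀ z ∈ lowerSimplex t h, DifferentiableAt ℝ f z := fun z hz =>
    differentiableAt_of_fderiv_apply_ne_zero ((hM i₀).trans_le (hderiv z (hT hz) i₀)).ne'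
  rw [psiIso_toLp_div_eq_indicator hh, psiIso_toLp_div_eq_indicator hh, ← indicator_const_mul,
    ← indicator_const_mul]
  refine sub_indicator_le_sub_indicator hmono (fun z hz => ?_) (fun p hp q hq hpq => ?_)
    (fun p hp q hq hpq => ?_) hxy
  · exact mul_nonneg hc₀.le (by linarith [hz.2])
  · rw [← hsum]
    exact sum_mul_sub_le_sub_of_mem_lowerSimplex (fun i => (hh i).le) hdiff
      (fun z hz => hderiv z (hT hz)) hp hq hpq
  · obtain ⟨z, hz, hpz, hzq, hSz⟩ := exists_mem_lowerSimplex_sum_div_eq hp hq hpq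
    exact ⟨z, hz, hpz, hzq, by rw [hSz]; ring⟩

/-- Let `f` be coordinate-wise nondecreasing on `ℝ^d` and `C¹` on a hyperrectangle `B` with
partial derivatives `∂f/∂xᵢ ≥ Mᵢ > 0` on `B`. Fix `t` and bandwidths `h` with `hᵢ Mᵢ = c`
constant in `i`, and suppose the simplex `{x : x ≤ t, Σᵢ (xᵢ - tᵢ)/hᵢ ≥ -1}` is contained
in `B`. Then the perturbed function `fₜ(x) = f(x) - c·ψ((x-t)/h)` is coordinate-wise
nondecreasing. -/
theorem perturbed_isotonic {d : ℕ} (f : EuclideanSpace ℝ (Fin d) → ℝ)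
    (a b t : EuclideanSpace ℝ (Fin d)) (M h : Fin d → ℝ) (c : ℝ)
    (B : Set (EuclideanSpace ℝ (Fin d)))
    (hB : B = {x : EuclideanSpace ℝ (Fin d) | ∀ i, a i ≤ x i ∧ x i ≤ b i})
    (hmono : ∀ x y : EuclideanSpace ℝ (Fin d), (∀ i, x i ≤ y i) → f x ≤ f y)
    (hC1 : ContDiffOn ℝ 1 f B)
    (hM : ∀ i, 0 < M i)
    (hderiv : ∀ x ∈ B, ∀ i, M i ≤ fderiv ℝ f x (EuclideanSpace.single i 1))
    (hh : ∀ i, 0 < h i)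
    (hc : ∀ i, h i * M i = c)
    (hT : {x : EuclideanSpace ℝ (Fin d) |
        (∀ i, x i ≤ t i) ∧ -1 ≤ ∑ i, (x i - t i) / h i} ⊆ B) :
    ∀ x y : EuclideanSpace ℝ (Fin d), (∀ i, x i ≤ y i) →
      f x - c * psiIso (WithLp.toLp 2 (fun i => (x i - t i) / h i)) ≤
        f y - c * psiIso (WithLp.toLp 2 (fun i => (y i - t i) / h i)) :=
  perturbed_isotonic_general f t M h c B hmono hM hderiv hh hc hT
end

section
/- Let {Zᵢ} be i.i.d. standard normal random variables. If v_m = (1−ε_m)√(2 log m) with ε_m → 0 and ε_m√(log m) → ∞, then E| (1/m) Σᵢ₌₁^m exp(v_m Zᵢ − v_m²/2) − 1 | → 0 as m → ∞. -/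
open MeasureTheory ProbabilityTheory Filter

/-!
Truncate the likelihood ratios `g(z) = exp (w z - w² / 2)` at `T = √(2 log m)`. The part
`g · 1{z ≤ T}` has second moment `exp (w²) P(Z ≤ T - 2w)`, so by Cauchy–Schwarz its sample mean is
within `√(exp (w²) P(Z ≤ T - 2w) / m)` of its mean in `L¹`; the part `g · 1{z > T}` is
nonnegative with mean `P(Z > T - w)`, so its sample mean is within twice that. For
`w = (1 - ε) T` the Gaussian Chernoff bound makes both terms at most `exp (-ε² log m)`, which
tends to zero because `ε √(log m) → ∞`.
-/

open Real Set Finset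
open scoped NNReal ENNReal Topology

/-- The density of `gaussianReal w 1` with respect to `gaussianReal 0 1`. -/
noncomputable def gaussianTilt (w x : ℝ) : ℝ := exp (w * x - w ^ 2 / 2)

lemma gaussianPDFReal_mul_gaussianTilt (w x : ℝ) :
    gaussianPDFReal 0 1 x * gaussianTilt w x = gaussianPDFReal w 1 x := by
  simp only [gaussianPDFReal, gaussianTilt, NNReal.coe_one, mul_one, sub_zero, mul_assoc,
    ← exp_add]
  ring_nf

lemma integral_gaussianTilt_mul (w : ℝ) (φ : ℝ → ℝ) :
    ∫ x, gaussianTilt w x * φ x ∂gaussianReal 0 1 = ∫ x, φ x ∂gaussianReal w 1 := by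
  simp_rw [integral_gaussianReal_eq_integral_smul one_ne_zero, smul_eq_mul, ← mul_assoc,
    gaussianPDFReal_mul_gaussianTilt]

lemma integral_indicator_gaussianTilt (w : ℝ) {s : Set ℝ} (hs : MeasurableSet s) :
    ∫ x, s.indicator (gaussianTilt w) x ∂gaussianReal 0 1 = (gaussianReal w 1).real s := by
  rw [← integral_indicator_one hs, ← integral_gaussianTilt_mul w]
  congr 1 with x
  by_cases hx : x ∈ s <;> simp [hx]

lemma integrable_gaussianTilt (w : ℝ) : Integrable (gaussianTilt w) (gaussianReal 0 1) := by
  unfold gaussianTilt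
  simp_rw [sub_eq_add_neg, exp_add]
  exact (integrable_exp_mul_gaussianReal w).mul_const _

lemma measurable_gaussianTilt (w : ℝ) : Measurable (gaussianTilt w) := by
  unfold gaussianTilt
  fun_prop

lemma gaussianTilt_sq (w x : ℝ) : gaussianTilt w x ^ 2 = exp (w ^ 2) * gaussianTilt (2 * w) x := by
  simp only [gaussianTilt, ← exp_nat_mul, ← exp_add]
  ring_nf

lemma gaussianReal_real_eq_preimage_add (w : ℝ) {s : Set ℝ} (hs : MeasurableSet s) :
    (gaussianReal w 1).real s = (gaussianReal 0 1).real ((· + w) ⁻¹' s) := by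
  rw [← map_measureReal_apply (measurable_add_const w) hs, gaussianReal_map_add_const, zero_add]

lemma hasSubgaussianMGF_id_gaussianReal (v : ℝ≥0) :
    HasSubgaussianMGF id v (gaussianReal 0 v) where
  integrable_exp_mul t := integrable_exp_mul_gaussianReal t
  mgf_le t := by simp [mgf_id_gaussianReal]

lemma gaussianReal_real_Ici_le {x : ℝ} (hx : 0 ≤ x) :
    (gaussianReal 0 1).real (Ici x) ≤ exp (-x ^ 2 / 2) := by
  simpa [← Ici_def] using (hasSubgaussianMGF_id_gaussianReal 1).measure_ge_le hx

lemma gaussianReal_real_Iic_le {x : ℝ} (hx : x ≤ 0) :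
    (gaussianReal 0 1).real (Iic x) ≤ exp (-x ^ 2 / 2) := by
  simpa [neg_le_neg_iff, ← Iic_def] using
    (hasSubgaussianMGF_id_gaussianReal 1).neg.measure_ge_le (neg_nonneg.2 hx)

section SampleMean

variable {Ω S : Type*} [MeasurableSpace Ω] {P : Measure Ω} [MeasurableSpace S] {μ : Measure S}

lemma ProbabilityTheory.HasLaw.integrable_comp {X : Ω → S} (hX : HasLaw X μ P) {f : S → ℝ}
    (hf : Integrable f μ) : Integrable (fun ω ↦ f (X ω)) P := by
  rw [← hX.map_eq] at hf
  exact (integrable_map_measure hf.aestronglyMeasurable hX.aemeasurable).1 hf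

lemma ProbabilityTheory.HasLaw.memLp_comp {X : Ω → S} (hX : HasLaw X μ P) {f : S → ℝ}
    {p : ℝ≥0∞} (hf : MemLp f p μ) : MemLp (fun ω ↦ f (X ω)) p P := by
  rw [← hX.map_eq] at hf
  exact (memLp_map_measure_iff hf.aestronglyMeasurable hX.aemeasurable).1 hf

lemma ProbabilityTheory.HasLaw.variance_comp {X : Ω → S} (hX : HasLaw X μ P) {f : S → ℝ}
    (hf : AEMeasurable f μ) : Var[fun ω ↦ f (X ω); P] = Var[f; μ] := by
  rw [← hX.map_eq] at hf ⊢
  exact (variance_map hf hX.aemeasurable).symm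

variable {X : ℕ → Ω → S}

lemma integral_sampleMean (hX : ∀ i, HasLaw (X i) μ P) {f : S → ℝ} (hf : Integrable f μ)
    {m : ℕ} (hm : m ≠ 0) :
    ∫ ω, (1 / (m : ℝ)) * ∑ i ∈ range m, f (X i ω) ∂P = ∫ x, f x ∂μ := by
  have hcomp i : ∫ ω, f (X i ω) ∂P = ∫ x, f x ∂μ := (hX i).integral_comp hf.aestronglyMeasurable
  rw [integral_const_mul, integral_finsetSum _ fun i _ ↦ (hX i).integrable_comp hf]
  simp [hcomp, hm]

lemma variance_sampleMean_le [IsProbabilityMeasure μ] (hX : ∀ i, HasLaw (X i) μ P)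
    (hindep : Pairwise fun i j ↦ X i ⟂ᵢ[P] X j) {f : S → ℝ} (hf : Measurable f)
    (hf2 : MemLp f 2 μ) (m : ℕ) :
    Var[fun ω ↦ (1 / (m : ℝ)) * ∑ i ∈ range m, f (X i ω); P] ≤ (∫ x, f x ^ 2 ∂μ) / m := by
  have hsum : Var[fun ω ↦ ∑ i ∈ range m, f (X i ω); P] = m * Var[f; μ] := by
    have := IndepFun.variance_sum (X := fun i ω ↦ f (X i ω)) (s := range m)
      (fun i _ ↦ (hX i).memLp_comp hf2) (fun i _ j _ hij ↦ (hindep hij).comp hf hf)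
    simp_rw [(hX _).variance_comp hf.aemeasurable, sum_const, card_range, nsmul_eq_mul] at this
    rw [← this]
    congr 1 with ω
    simp
  have hvar : Var[f; μ] ≤ ∫ x, f x ^ 2 ∂μ := by
    simpa using variance_le_expectation_sq (X := f) (μ := μ) hf.aestronglyMeasurable
  rw [variance_const_mul, hsum]
  rcases Nat.eq_zero_or_pos m with rfl | hm
  · simp
  calc (1 / (m : ℝ)) ^ 2 * (m * Var[f; μ]) = Var[f; μ] / m := by field_simp
    _ ≤ (∫ x, f x ^ 2 ∂μ) / m := by gcongr

variable [IsProbabilityMeasure P]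

lemma integral_abs_le_sqrt_integral_sq {Y : Ω → ℝ} (hY : MemLp Y 2 P) :
    ∫ ω, |Y ω| ∂P ≤ √(∫ ω, Y ω ^ 2 ∂P) := by
  have h := variance_eq_sub hY.abs
  simp only [Pi.pow_apply, Pi.abs_apply, sq_abs] at h
  refine Real.le_sqrt_of_sq_le ?_
  linarith [variance_nonneg |Y| P]

lemma integral_abs_sub_integral_le_sqrt_variance {Y : Ω → ℝ} (hY : MemLp Y 2 P) :
    ∫ ω, |Y ω - ∫ ω', Y ω' ∂P| ∂P ≤ √(Var[Y; P]) := by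
  rw [variance_eq_integral hY.aemeasurable]
  exact integral_abs_le_sqrt_integral_sq (hY.sub (memLp_const _))

lemma integral_abs_sampleMean_sub_le_sqrt [IsProbabilityMeasure μ] (hX : ∀ i, HasLaw (X i) μ P)
    (hindep : Pairwise fun i j ↦ X i ⟂ᵢ[P] X j) {f : S → ℝ} (hf : Measurable f)
    (hf2 : MemLp f 2 μ) {m : ℕ} (hm : m ≠ 0) :
    ∫ ω, |(1 / (m : ℝ)) * ∑ i ∈ range m, f (X i ω) - ∫ x, f x ∂μ| ∂P
      ≤ √((∫ x, f x ^ 2 ∂μ) / m) := by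
  have hmean : MemLp (fun ω ↦ (1 / (m : ℝ)) * ∑ i ∈ range m, f (X i ω)) 2 P :=
    (memLp_finsetSum _ fun i _ ↦ (hX i).memLp_comp hf2).const_mul _
  have := integral_abs_sub_integral_le_sqrt_variance hmean
  rw [integral_sampleMean hX (hf2.integrable one_le_two) hm] at this
  exact this.trans (Real.sqrt_le_sqrt (variance_sampleMean_le hX hindep hf hf2 m))

lemma integral_abs_sampleMean_sub_le_two_mul (hX : ∀ i, HasLaw (X i) μ P) {h : S → ℝ}
    (h0 : 0 ≤ h) (hh : Integrable h μ) {m : ℕ} (hm : m ≠ 0) :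
    ∫ ω, |(1 / (m : ℝ)) * ∑ i ∈ range m, h (X i ω) - ∫ x, h x ∂μ| ∂P ≤ 2 * ∫ x, h x ∂μ := by
  have hint : Integrable (fun ω ↦ (1 / (m : ℝ)) * ∑ i ∈ range m, h (X i ω)) P :=
    (integrable_finsetSum _ fun i _ ↦ (hX i).integrable_comp hh).const_mul _
  have hpt ω : |(1 / (m : ℝ)) * ∑ i ∈ range m, h (X i ω) - ∫ x, h x ∂μ|
      ≤ (1 / (m : ℝ)) * ∑ i ∈ range m, h (X i ω) + ∫ x, h x ∂μ := by
    have : 0 ≤ (1 / (m : ℝ)) * ∑ i ∈ range m, h (X i ω) :=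
      mul_nonneg (by positivity) (sum_nonneg fun i _ ↦ h0 _)
    have : 0 ≤ ∫ x, h x ∂μ := integral_nonneg h0
    rw [abs_le]
    constructor <;> linarith
  calc _ ≤ ∫ ω, (1 / (m : ℝ)) * ∑ i ∈ range m, h (X i ω) + ∫ x, h x ∂μ ∂P :=
        integral_mono_of_nonneg (ae_of_all _ fun _ ↦ abs_nonneg _)
          (hint.add (integrable_const _)) (ae_of_all _ hpt)
    _ = 2 * ∫ x, h x ∂μ := by
        rw [integral_add hint (integrable_const _), integral_sampleMean hX hh hm]
        simp
        ring

lemma integral_abs_sampleMean_add_sub_le [IsProbabilityMeasure μ] (hX : ∀ i, HasLaw (X i) μ P)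
    (hindep : Pairwise fun i j ↦ X i ⟂ᵢ[P] X j) {f h : S → ℝ} (hf : Measurable f)
    (hf2 : MemLp f 2 μ) (h0 : 0 ≤ h) (hh : Integrable h μ) {m : ℕ} (hm : m ≠ 0) :
    ∫ ω, |(1 / (m : ℝ)) * ∑ i ∈ range m, (f (X i ω) + h (X i ω))
        - (∫ x, f x ∂μ + ∫ x, h x ∂μ)| ∂P
      ≤ √((∫ x, f x ^ 2 ∂μ) / m) + 2 * ∫ x, h x ∂μ := by
  set A := fun ω ↦ (1 / (m : ℝ)) * ∑ i ∈ range m, f (X i ω) - ∫ x, f x ∂μ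
  set B := fun ω ↦ (1 / (m : ℝ)) * ∑ i ∈ range m, h (X i ω) - ∫ x, h x ∂μ
  have hA : Integrable A P :=
    ((integrable_finsetSum _ fun i _ ↦ (hX i).integrable_comp (hf2.integrable one_le_two)).const_mul
      _).sub (integrable_const _)
  have hB : Integrable B P :=
    ((integrable_finsetSum _ fun i _ ↦ (hX i).integrable_comp hh).const_mul _).sub
      (integrable_const _)
  calc _ = ∫ ω, |A ω + B ω| ∂P := by
        congr 1 with ω
        simp only [A, B, sum_add_distrib]
        ring_nf
    _ ≤ ∫ ω, |A ω| + |B ω| ∂P :=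
        integral_mono_of_nonneg (ae_of_all _ fun _ ↦ abs_nonneg _) (hA.abs.add hB.abs)
          (ae_of_all _ fun ω ↦ abs_add_le _ _)
    _ ≤ _ := by
        rw [integral_add hA.abs hB.abs]
        exact add_le_add (integral_abs_sampleMean_sub_le_sqrt hX hindep hf hf2 hm)
          (integral_abs_sampleMean_sub_le_two_mul hX h0 hh hm)

end SampleMean

section GaussianTruncation

variable {Ω : Type*} [MeasurableSpace Ω] {P : Measure Ω} [IsProbabilityMeasure P]
  {X : ℕ → Ω → ℝ}

lemma integral_abs_sampleMean_gaussianTilt_sub_one_le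
    (hX : ∀ i, HasLaw (X i) (gaussianReal 0 1) P) (hindep : Pairwise fun i j ↦ X i ⟂ᵢ[P] X j)
    {m : ℕ} (hm : m ≠ 0) (w T : ℝ) :
    ∫ ω, |(1 / (m : ℝ)) * ∑ i ∈ range m, gaussianTilt w (X i ω) - 1| ∂P
      ≤ √(exp (w ^ 2) * (gaussianReal 0 1).real (Iic (T - 2 * w)) / m)
        + 2 * (gaussianReal 0 1).real (Ioi (T - w)) := by
  have hsplit x : (Iic T).indicator (gaussianTilt w) x + (Ioi T).indicator (gaussianTilt w) x
      = gaussianTilt w x := by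
    rw [← compl_Iic, indicator_self_add_compl_apply]
  have hsq x : (Iic T).indicator (gaussianTilt w) x ^ 2
      = exp (w ^ 2) * (Iic T).indicator (gaussianTilt (2 * w)) x := by
    by_cases hx : x ∈ Iic T <;> simp [hx, gaussianTilt_sq]
  have hf_sq : ∫ x, (Iic T).indicator (gaussianTilt w) x ^ 2 ∂gaussianReal 0 1
      = exp (w ^ 2) * (gaussianReal 0 1).real (Iic (T - 2 * w)) := by
    rw [funext hsq, integral_const_mul, integral_indicator_gaussianTilt _ measurableSet_Iic,
      gaussianReal_real_eq_preimage_add _ measurableSet_Iic, preimage_add_const_Iic]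
  have hf2 : MemLp ((Iic T).indicator (gaussianTilt w)) 2 (gaussianReal 0 1) := by
    refine (memLp_two_iff_integrable_sq
      ((integrable_gaussianTilt w).indicator measurableSet_Iic).aestronglyMeasurable).2 ?_
    rw [funext hsq]
    exact ((integrable_gaussianTilt _).indicator measurableSet_Iic).const_mul _
  have hh : ∫ x, (Ioi T).indicator (gaussianTilt w) x ∂gaussianReal 0 1
      = (gaussianReal 0 1).real (Ioi (T - w)) := by
    rw [integral_indicator_gaussianTilt _ measurableSet_Ioi,
      gaussianReal_real_eq_preimage_add _ measurableSet_Ioi, preimage_add_const_Ioi]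
  have hmass : ∫ x, (Iic T).indicator (gaussianTilt w) x ∂gaussianReal 0 1
      + ∫ x, (Ioi T).indicator (gaussianTilt w) x ∂gaussianReal 0 1 = 1 := by
    rw [← integral_add ((integrable_gaussianTilt w).indicator measurableSet_Iic)
      ((integrable_gaussianTilt w).indicator measurableSet_Ioi)]
    simpa [hsplit] using integral_indicator_gaussianTilt w MeasurableSet.univ
  calc _ = ∫ ω, |(1 / (m : ℝ)) * ∑ i ∈ range m,
          ((Iic T).indicator (gaussianTilt w) (X i ω) + (Ioi T).indicator (gaussianTilt w) (X i ω))
        - (∫ x, (Iic T).indicator (gaussianTilt w) x ∂gaussianReal 0 1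
          + ∫ x, (Ioi T).indicator (gaussianTilt w) x ∂gaussianReal 0 1)| ∂P := by
        simp_rw [hsplit, hmass]
    _ ≤ _ := integral_abs_sampleMean_add_sub_le (h := (Ioi T).indicator (gaussianTilt w))
        hX hindep ((measurable_gaussianTilt w).indicator measurableSet_Iic) hf2
        (indicator_nonneg fun x _ ↦ (exp_pos _).le)
        ((integrable_gaussianTilt w).indicator measurableSet_Ioi) hm
    _ = _ := by rw [hf_sq, hh]


lemma integral_abs_sampleMean_gaussianTilt_sub_one_le_exp
    (hX : ∀ i, HasLaw (X i) (gaussianReal 0 1) P) (hindep : Pairwise fun i j ↦ X i ⟂ᵢ[P] X j)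
    {m : ℕ} (hm : m ≠ 0) {ε : ℝ} (hε0 : 0 ≤ ε) (hε : ε ≤ 1 / 2) :
    ∫ ω, |(1 / (m : ℝ)) * ∑ i ∈ range m,
        gaussianTilt ((1 - ε) * √(2 * log m)) (X i ω) - 1| ∂P
      ≤ 3 * exp (-(ε * √(log m)) ^ 2) := by
  set L := log m
  set T := √(2 * L)
  have hL : 0 ≤ L := log_natCast_nonneg m
  have hT : 0 ≤ T := sqrt_nonneg _
  have hT2 : T ^ 2 = 2 * L := sq_sqrt (by positivity)
  have hrate : (ε * √L) ^ 2 = ε ^ 2 * L := by rw [mul_pow, sq_sqrt hL]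
  have hm_exp : (m : ℝ) = exp L := (exp_log (by positivity)).symm
  have hbulk : exp (((1 - ε) * T) ^ 2) * (gaussianReal 0 1).real (Iic (T - 2 * ((1 - ε) * T))) / m
      ≤ exp (-(ε * √L) ^ 2) ^ 2 := by
    have htail := gaussianReal_real_Iic_le (x := -((1 - 2 * ε) * T)) (by nlinarith)
    rw [show T - 2 * ((1 - ε) * T) = -((1 - 2 * ε) * T) by ring, hm_exp]
    calc _ ≤ exp (((1 - ε) * T) ^ 2) * exp (-(-((1 - 2 * ε) * T)) ^ 2 / 2) / exp L := by gcongr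
      _ = exp (-(ε * √L) ^ 2) ^ 2 := by
        rw [← exp_add, ← exp_sub, ← exp_nat_mul]
        congr 1
        linear_combination (1 / 2 - ε ^ 2) * hT2 + 2 * hrate
  have htail : (gaussianReal 0 1).real (Ioi (T - (1 - ε) * T)) ≤ exp (-(ε * √L) ^ 2) := by
    calc _ ≤ (gaussianReal 0 1).real (Ici (ε * T)) :=
          measureReal_mono (by rw [show T - (1 - ε) * T = ε * T by ring]; exact Ioi_subset_Ici_self)
      _ ≤ exp (-(ε * T) ^ 2 / 2) := gaussianReal_real_Ici_le (by positivity)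
      _ = exp (-(ε * √L) ^ 2) := by
        congr 1
        linear_combination (-ε ^ 2 / 2) * hT2 + hrate
  calc _ ≤ √(exp (((1 - ε) * T) ^ 2) * (gaussianReal 0 1).real (Iic (T - 2 * ((1 - ε) * T))) / m)
        + 2 * (gaussianReal 0 1).real (Ioi (T - (1 - ε) * T)) :=
        integral_abs_sampleMean_gaussianTilt_sub_one_le hX hindep hm _ T
    _ ≤ exp (-(ε * √L) ^ 2) + 2 * exp (-(ε * √L) ^ 2) := by
        gcongr
        exact (sqrt_le_left (exp_pos _).le).2 hbulk
    _ = 3 * exp (-(ε * √L) ^ 2) := by ring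

end GaussianTruncation

/-- Dümbgen–Spokoiny lemma: if `Z₁, Z₂, …` are i.i.d. standard normal and
`v_m = (1 - ε_m)√(2 log m)` with `ε_m → 0` and `ε_m √(log m) → ∞`, then
`E |(1/m) Σ_{i<m} exp(v_m Z_i - v_m²/2) - 1| → 0`. -/
theorem dumbgen_spokoiny_lemma {Ω : Type*} [MeasureSpace Ω]
    [IsProbabilityMeasure (ℙ : Measure Ω)]
    (Z : ℕ → Ω → ℝ) (hmeas : ∀ i, Measurable (Z i))
    (hindep : iIndepFun Z ℙ)
    (hgauss : ∀ i, Measure.map (Z i) ℙ = gaussianReal 0 1)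
    (v ε : ℕ → ℝ)
    (hv : ∀ m, v m = (1 - ε m) * Real.sqrt (2 * Real.log m))
    (hε0 : Tendsto ε atTop (nhds 0))
    (hεlog : Tendsto (fun m => ε m * Real.sqrt (Real.log m)) atTop atTop) :
    Tendsto (fun m : ℕ => ∫ ω,
        |(1 / (m : ℝ)) * ∑ i ∈ Finset.range m, Real.exp (v m * Z i ω - (v m) ^ 2 / 2) - 1| ∂ℙ)
      atTop (nhds 0) := by
  have hX i : HasLaw (Z i) (gaussianReal 0 1) ℙ := ⟨(hmeas i).aemeasurable, hgauss i⟩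
  have hpair : Pairwise fun i j ↦ Z i ⟂ᵢ[ℙ] Z j := fun i j hij ↦ hindep.indepFun hij
  have hrate : Tendsto (fun m : ℕ ↦ 3 * exp (-(ε m * √(log m)) ^ 2)) atTop (𝓝 0) := by
    simpa using (tendsto_exp_atBot.comp
      (tendsto_neg_atTop_atBot.comp ((tendsto_pow_atTop two_ne_zero).comp hεlog))).const_mul 3
  refine squeeze_zero' (Eventually.of_forall fun m ↦ integral_nonneg fun ω ↦ abs_nonneg _) ?_ hrate
  filter_upwards [eventually_ne_atTop 0, hεlog.eventually_gt_atTop 0,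
    hε0.eventually (eventually_le_nhds one_half_pos)] with m hm hpos hhalf
  have hε : 0 ≤ ε m := (pos_of_mul_pos_left hpos (sqrt_nonneg _)).le
  simpa only [hv, gaussianTilt] using
    integral_abs_sampleMean_gaussianTilt_sub_one_le_exp hX hpair hm hε hhalf
end

section
/- Let G_A(y) := (‖y‖²/2)·1{‖y‖ ≤ α_d} with α_d := √(2(d+3)/(d+1)), and let g: ℝ^d → ℝ be differentiable with Σᵢ|∂g/∂xᵢ(y) − ∂g/∂xᵢ(z)| ≤ ‖y−z‖ for all y,z. Then G_A − g is convex on the ball {‖y‖ ≤ α_d}. -/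
/-!
The ℓ¹ bound on the differences of partial derivatives dominates the operator norm, so the
gradient of `g` is 1-Lipschitz. Along any line `t ↦ x + t (y - x)` the derivative of `‖·‖²/2`
then increases at rate `‖y - x‖²`, while that of `g` increases at rate at most `‖y - x‖²`; hence
`‖·‖²/2 - g` is convex on every line, so on the whole space and in particular on the ball.
-/

open Set AffineMap
open scoped RealInnerProductSpace NNReal

theorem convexOn_univ_of_convexOn_lineMap {E : Type*} [AddCommGroup E] [Module ℝ E]
    {f : E → ℝ} (h : ∀ x y : E, ConvexOn ℝ univ (f ∘ (lineMap x y : ℝ → E))) :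
    ConvexOn ℝ univ f := by
  refine ⟨convex_univ, fun x _ y _ a b ha hb hab => ?_⟩
  have hseg := (h x y).2 (mem_univ 0) (mem_univ 1) ha hb hab
  have ha' : 1 - b = a := by linarith
  simpa [lineMap_apply_module, ha'] using hseg

theorem EuclideanSpace.opNorm_le_sum_norm_apply_single {ι F : Type*} [Fintype ι]
    [DecidableEq ι] [NormedAddCommGroup F] [NormedSpace ℝ F]
    (L : EuclideanSpace ℝ ι →L[ℝ] F) :
    ‖L‖ ≤ ∑ i, ‖L (EuclideanSpace.single i 1)‖ := by
  refine L.opNorm_le_bound (by positivity) fun w => ?_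
  have hw : L w = ∑ i, w i • L (EuclideanSpace.single i 1) := by
    conv_lhs => rw [← (EuclideanSpace.basisFun ι ℝ).sum_repr w]
    simp [map_sum, map_smul]
  calc ‖L w‖ ≤ ∑ i, ‖w i • L (EuclideanSpace.single i 1)‖ := hw ▸ norm_sum_le _ _
    _ ≤ ∑ i, ‖L (EuclideanSpace.single i 1)‖ * ‖w‖ := by
      gcongr with i
      rw [norm_smul, mul_comm]
      gcongr
      exact PiLp.norm_apply_le w i
    _ = (∑ i, ‖L (EuclideanSpace.single i 1)‖) * ‖w‖ := (Finset.sum_mul ..).symm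

theorem convexOn_univ_mul_norm_sq_sub_of_lipschitzWith_fderiv {E : Type*}
    [NormedAddCommGroup E] [InnerProductSpace ℝ E] {K : ℝ≥0} {f : E → ℝ}
    (hf : Differentiable ℝ f) (hf' : LipschitzWith K (fderiv ℝ f)) :
    ConvexOn ℝ univ (fun x => K / 2 * ‖x‖ ^ 2 - f x) := by
  refine convexOn_univ_of_convexOn_lineMap fun x y => ?_
  set l : ℝ → E := ⇑(lineMap x y : ℝ →ᵃ[ℝ] E)
  have hl : ∀ s t, l t - l s = (t - s) • (y - x) := fun s t => by
    simp only [l, lineMap_apply_module]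
    module
  have hderiv : ∀ t, HasDerivAt ((fun x => K / 2 * ‖x‖ ^ 2 - f x) ∘ l)
      (K * ⟪l t, y - x⟫ - fderiv ℝ f (l t) (y - x)) t := fun t => by
    have hlt : HasDerivAt l (y - x) t := hasDerivAt_lineMap
    exact ((hlt.norm_sq.const_mul (K / 2 : ℝ)).sub
      ((hf (l t)).hasFDerivAt.comp_hasDerivAt t hlt)).congr_deriv (by ring)
  refine Monotone.convexOn_univ_of_deriv (fun t => (hderiv t).differentiableAt)
    fun s t hst => ?_
  rw [(hderiv s).deriv, (hderiv t).deriv]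
  have hgrad : fderiv ℝ f (l t) (y - x) - fderiv ℝ f (l s) (y - x)
      ≤ K * ((t - s) * ‖y - x‖ ^ 2) := calc
    _ = (fderiv ℝ f (l t) - fderiv ℝ f (l s)) (y - x) := rfl
    _ ≤ ‖fderiv ℝ f (l t) - fderiv ℝ f (l s)‖ * ‖y - x‖ :=
      (Real.le_norm_self _).trans (ContinuousLinearMap.le_opNorm _ _)
    _ ≤ K * ‖l t - l s‖ * ‖y - x‖ := by
      gcongr
      simpa only [dist_eq_norm] using hf'.dist_le_mul (l t) (l s)
    _ = K * ((t - s) * ‖y - x‖ ^ 2) := by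
      rw [hl, norm_smul, Real.norm_of_nonneg (sub_nonneg.2 hst)]
      ring
  have hinner : ⟪l t, y - x⟫ - ⟪l s, y - x⟫ = (t - s) * ‖y - x‖ ^ 2 := by
    rw [← inner_sub_left, hl, real_inner_smul_left, real_inner_self_eq_norm_sq]
  linear_combination hgrad - (K : ℝ) * hinner

theorem GA_sub_convex_on_ball_general {d : ℕ}
    (g : EuclideanSpace ℝ (Fin d) → ℝ) (hg : Differentiable ℝ g)
    (hlip : ∀ y z : EuclideanSpace ℝ (Fin d),
      ∑ i, |fderiv ℝ g y (EuclideanSpace.single i 1) -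
            fderiv ℝ g z (EuclideanSpace.single i 1)| ≤ ‖y - z‖) :
    ConvexOn ℝ (Metric.closedBall (0 : EuclideanSpace ℝ (Fin d))
        (Real.sqrt (2 * ((d : ℝ) + 3) / ((d : ℝ) + 1))))
      (fun y : EuclideanSpace ℝ (Fin d) => ‖y‖ ^ 2 / 2 - g y) := by
  have hg' : LipschitzWith 1 (fderiv ℝ g) := LipschitzWith.of_dist_le_mul fun y z => by
    rw [dist_eq_norm, dist_eq_norm, NNReal.coe_one, one_mul]
    refine (EuclideanSpace.opNorm_le_sum_norm_apply_single _).trans ?_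
    simpa using hlip y z
  refine ((convexOn_univ_mul_norm_sq_sub_of_lipschitzWith_fderiv hg hg').subset
    (subset_univ _) (convex_closedBall _ _)).congr fun y _ => ?_
  simp only [NNReal.coe_one]
  ring

/-- Let `G_A(y) = ‖y‖²/2` on the ball of radius `α_d = √(2(d+3)/(d+1))`, and let
`g : ℝ^d → ℝ` be differentiable with `Σᵢ |∂ᵢg(y) - ∂ᵢg(z)| ≤ ‖y - z‖` for all `y, z`.
Then `G_A - g` is convex on the closed ball of radius `α_d`. -/
theorem GA_sub_convex_on_ball {d : ℕ} (hd : 1 ≤ d)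
    (g : EuclideanSpace ℝ (Fin d) → ℝ) (hg : Differentiable ℝ g)
    (hlip : ∀ y z : EuclideanSpace ℝ (Fin d),
      ∑ i, |fderiv ℝ g y (EuclideanSpace.single i 1) -
            fderiv ℝ g z (EuclideanSpace.single i 1)| ≤ ‖y - z‖) :
    ConvexOn ℝ (Metric.closedBall (0 : EuclideanSpace ℝ (Fin d))
        (Real.sqrt (2 * ((d : ℝ) + 3) / ((d : ℝ) + 1))))
      (fun y : EuclideanSpace ℝ (Fin d) => ‖y‖ ^ 2 / 2 - g y) :=
  GA_sub_convex_on_ball_general g hg hlip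
end

section
/- Let α_d := √(2(d+3)/(d+1)) and G₀(y) := (−1 + (√2(d+2)/√((d+1)(d+3)))‖y‖)·1{‖y‖ ≤ α_d}, and ψ(y) := (‖y‖²/2 − G₀(y))·1{‖y‖ ≤ α_d}. Then ∫_{‖y‖≤α_d} (G₀(y) + 1)·ψ(y) dy = 0. -/
open MeasureTheory Set


lemma key_scalar (m : ℕ) (t : ℝ) (ht : t = (m:ℝ))
    (α : ℝ) (hα : α = Real.sqrt (2 * (t + 4) / (t + 2)))
    (c : ℝ) (hc : c = Real.sqrt 2 * (t + 3) / Real.sqrt ((t + 2) * (t + 4))) :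
    c / 2 * (α ^ (m + 4) / (m + 4)) + c * (α ^ (m + 2) / (m + 2))
      - c ^ 2 * (α ^ (m + 3) / (m + 3)) = 0 := by
  have ht0 : 0 ≤ t := by rw [ht]; positivity
  have h2 : (0:ℝ) < t + 2 := by linarith
  have h3 : (0:ℝ) < t + 3 := by linarith
  have h4 : (0:ℝ) < t + 4 := by linarith
  have hα2 : α ^ 2 = 2 * (t + 4) / (t + 2) := by
    rw [hα, Real.sq_sqrt]; positivity
  have hc2 : c ^ 2 = 2 * (t + 3) ^ 2 / ((t + 2) * (t + 4)) := by
    rw [hc, div_pow, mul_pow, Real.sq_sqrt (by norm_num : (0:ℝ) ≤ 2),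
      Real.sq_sqrt (by positivity : (0:ℝ) ≤ (t + 2) * (t + 4))]
  have hcα : c * α = 2 * (t + 3) / (t + 2) := by
    have hsq : (c * α) ^ 2 = (2 * (t + 3) / (t + 2)) ^ 2 := by
      rw [mul_pow, hc2, hα2]; field_simp
    have hc0 : 0 ≤ c := by rw [hc]; positivity
    have hα0 : 0 ≤ α := by rw [hα]; positivity
    exact (sq_eq_sq₀ (by positivity) (by positivity)).mp hsq
  have e1 : α ^ (m + 4) = α ^ (m + 2) * (2 * (t + 4) / (t + 2)) := by
    rw [← hα2]; ring
  have e2 : c ^ 2 * α ^ (m + 3) = c * α ^ (m + 2) * (2 * (t + 3) / (t + 2)) := by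
    rw [← hcα]; ring
  have hm2 : (0:ℝ) < (m:ℝ) + 2 := by positivity
  have hm3 : (0:ℝ) < (m:ℝ) + 3 := by positivity
  have hm4 : (0:ℝ) < (m:ℝ) + 4 := by positivity
  have e2' : c ^ 2 * (α ^ (m + 3) / ((m:ℝ) + 3))
      = c * α ^ (m + 2) * (2 * (t + 3) / (t + 2)) / ((m:ℝ) + 3) := by
    rw [← mul_div_assoc, e2]
  rw [e1, e2', ht]
  field_simp
  ring

/-- With `α_d = √(2(d+3)/(d+1))`,
`G₀(y) = -1 + (√2 (d+2)/√((d+1)(d+3))) ‖y‖` and `ψ(y) = ‖y‖²/2 - G₀(y)` on the ball of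
radius `α_d`, one has `∫_{‖y‖ ≤ α_d} (G₀(y) + 1) ψ(y) dy = 0`. -/
theorem G0_psi_orthogonality {d : ℕ} (hd : 1 ≤ d) :
    ∫ y in Metric.closedBall (0 : EuclideanSpace ℝ (Fin d))
        (Real.sqrt (2 * ((d : ℝ) + 3) / ((d : ℝ) + 1))),
      ((-1 + (Real.sqrt 2 * ((d : ℝ) + 2) / Real.sqrt (((d : ℝ) + 1) * ((d : ℝ) + 3))) * ‖y‖) + 1)
        * (‖y‖ ^ 2 / 2 -
          (-1 + (Real.sqrt 2 * ((d : ℝ) + 2) / Real.sqrt (((d : ℝ) + 1) * ((d : ℝ) + 3))) * ‖y‖))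
      = 0 := by
  obtain ⟨m, rfl⟩ : ∃ m, d = m + 1 := ⟨d - 1, (Nat.succ_pred_eq_of_pos hd).symm⟩
  set t : ℝ := (m : ℝ) with htdef
  have hc1 : (((m+1:ℕ) : ℝ) + 3) = t + 4 := by push_cast; ring
  have hc2 : (((m+1:ℕ) : ℝ) + 1) = t + 2 := by push_cast; ring
  have hc3 : (((m+1:ℕ) : ℝ) + 2) = t + 3 := by push_cast; ring
  rw [hc1, hc2, hc3]
  set α : ℝ := Real.sqrt (2 * (t + 4) / (t + 2)) with hαdef
  set c : ℝ := Real.sqrt 2 * (t + 3) / Real.sqrt ((t + 2) * (t + 4)) with hcdef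
  have hα0 : 0 ≤ α := Real.sqrt_nonneg _
  set f : ℝ → ℝ := fun r => if r ≤ α then c * r * (r ^ 2 / 2 + 1 - c * r) else 0 with hf
  have step1 : ∫ y in Metric.closedBall (0 : EuclideanSpace ℝ (Fin (m+1))) α,
      ((-1 + c * ‖y‖) + 1) * (‖y‖ ^ 2 / 2 - (-1 + c * ‖y‖)) = ∫ y : EuclideanSpace ℝ (Fin (m+1)), f ‖y‖ := by
    rw [← integral_indicator measurableSet_closedBall]
    congr 1; funext y
    rw [indicator]
    simp only [Metric.mem_closedBall, dist_zero_right, hf]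
    split_ifs with h
    · ring
    · rfl
  rw [step1, integral_fun_norm_addHaar volume f, finrank_euclideanSpace_fin]
  have inner : ∫ r in Ioi (0:ℝ), r ^ (m + 1 - 1) • f r = 0 := by
    have congr1 : ∀ r ∈ Ioi (0:ℝ), r ^ (m + 1 - 1) • f r
        = (Ioc 0 α).indicator (fun r => r ^ m * (c * r * (r ^ 2 / 2 + 1 - c * r))) r := by
      intro r hr
      rw [indicator]
      simp only [hf, smul_eq_mul, Nat.add_sub_cancel, mem_Ioc]
      split_ifs with h1 h2 h3
      · rfl
      · exact absurd ⟨hr, h1⟩ h2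
      · exact absurd h3.2 h1
      · exact mul_zero _
    rw [setIntegral_congr_fun measurableSet_Ioi congr1,
      setIntegral_indicator measurableSet_Ioc,
      show Ioi (0:ℝ) ∩ Ioc 0 α = Ioc 0 α by rw [inter_eq_self_of_subset_right Ioc_subset_Ioi_self],
      ← intervalIntegral.integral_of_le hα0]
    have hval : ∫ r in (0:ℝ)..α, r ^ m * (c * r * (r ^ 2 / 2 + 1 - c * r)) =
        c / 2 * (α ^ (m + 4) / (m + 4)) + c * (α ^ (m + 2) / (m + 2))
        - c ^ 2 * (α ^ (m + 3) / (m + 3)) := by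
      have h : (fun r : ℝ => r ^ m * (c * r * (r ^ 2 / 2 + 1 - c * r)))
          = fun r : ℝ => c / 2 * r ^ (m + 3) + c * r ^ (m + 1) - c ^ 2 * r ^ (m + 2) := by
        funext r; ring
      rw [h]
      have i1 : IntervalIntegrable (fun r : ℝ => c / 2 * r ^ (m + 3)) volume 0 α :=
        (by fun_prop : Continuous fun r : ℝ => c / 2 * r ^ (m + 3)).intervalIntegrable _ _
      have i2 : IntervalIntegrable (fun r : ℝ => c * r ^ (m + 1)) volume 0 α :=
        (by fun_prop : Continuous _).intervalIntegrable _ _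
      have i3 : IntervalIntegrable (fun r : ℝ => c ^ 2 * r ^ (m + 2)) volume 0 α :=
        (by fun_prop : Continuous _).intervalIntegrable _ _
      rw [intervalIntegral.integral_sub (i1.add i2) i3, intervalIntegral.integral_add i1 i2,
        intervalIntegral.integral_const_mul, intervalIntegral.integral_const_mul,
        intervalIntegral.integral_const_mul, integral_pow, integral_pow, integral_pow]
      push_cast
      ring
    rw [hval]
    exact key_scalar m t htdef α hαdef c hcdef
  rw [inner, smul_zero, smul_zero]
end
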